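/- arXiv:2508.13100 — 2 statements merged into one kernel-verified Lean document; each statement's English description precedes it below -/
import Mathlib

section
/- Let α ≥ 1 and let J be a probability distribution of (v,y) ∈ [0,1] × {0,1}. Let J̄ be the distribution of (v̄, y) where (v,y) ~ J and v̄ := E_J[v] is deterministic. Then ℓα-ECE(J̄) ≤ ℓα-ECE(J), where ℓα-ECE(J) := E_J[ |v − E_J[y | v]|^α ]. -/
open MeasureTheory Finset

noncomputable section

/-- The σ-algebra generated by the prediction (the first coordinate). -/
def predSigma : MeasurableSpace (ℝ × ℝ) :=
  MeasurableSpace.comap Prod.fst inferInstance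

/-- The ℓα expected calibration error: `E[ |v - E[y | v]|^α ]`, where `E[y | v]` is the
conditional expectation of the state given the prediction. -/
def lECE (α : ℝ) (mu : Measure (ℝ × ℝ)) : ℝ :=
  ∫ x, |x.1 - (mu[(fun z : ℝ × ℝ => z.2)|predSigma]) x| ^ α ∂mu

/-!
Write `v̂ = E[y | v]`. Under `J̄` the prediction is the constant `E[v]`, so the conditional
expectation of `y` is the constant `E[y] = E[v̂]`, and
`ℓα-ECE(J̄) = |E[v] - E[v̂]|^α = |E[v - v̂]|^α`. By Jensen's inequality for the convex
function `t ↦ |t|^α` this is at most `E[|v - v̂|^α]`.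
-/

theorem predSigma_le : predSigma ≤ (inferInstance : MeasurableSpace (ℝ × ℝ)) :=
  measurable_fst.comap_le

theorem norm_integral_rpow_le_integral_norm_rpow {Ω E : Type*} [MeasurableSpace Ω]
    [NormedAddCommGroup E] [NormedSpace ℝ E] {μ : Measure Ω} [IsProbabilityMeasure μ]
    {f : Ω → E} {α : ℝ} (hα : 1 ≤ α) (hf : MemLp f (ENNReal.ofReal α) μ) :
    ‖∫ x, f x ∂μ‖ ^ α ≤ ∫ x, ‖f x‖ ^ α ∂μ := by
  have hf_int : Integrable f μ := hf.integrable (by simpa using hα)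
  have hf_rpow_int : Integrable (fun x => ‖f x‖ ^ α) μ := by
    simpa [ENNReal.toReal_ofReal (zero_le_one.trans hα)] using hf.integrable_norm_rpow'
  calc ‖∫ x, f x ∂μ‖ ^ α ≤ (∫ x, ‖f x‖ ∂μ) ^ α := by
        gcongr
        exact norm_integral_le_integral_norm f
    _ ≤ ∫ x, ‖f x‖ ^ α ∂μ :=
        (convexOn_rpow hα).map_integral_le
          (Real.continuous_rpow_const (zero_le_one.trans hα)).continuousOn isClosed_Ici
          (.of_forall fun x => norm_nonneg (f x)) hf_int.norm hf_rpow_int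

theorem condExp_predSigma_ae_eq_integral_of_fst_ae_eq {ν : Measure (ℝ × ℝ)}
    [IsProbabilityMeasure ν] {c : ℝ} (hfst : ∀ᵐ x ∂ν, x.1 = c) (f : ℝ × ℝ → ℝ) :
    ν[f|predSigma] =ᵐ[ν] fun _ => ∫ x, f x ∂ν := by
  by_cases hf : Integrable f ν
  swap
  · rw [condExp_of_not_integrable hf, integral_undef hf]
    rfl
  refine (ae_eq_condExp_of_forall_setIntegral_eq predSigma_le hf
    (fun _ _ _ => (integrable_const _).integrableOn) (fun s hs _ => ?_)
    aestronglyMeasurable_const).symm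
  obtain ⟨B, -, rfl⟩ := hs
  -- Since the prediction is a.s. `c`, a prediction event is a.s. everything or nothing.
  by_cases hcB : c ∈ B
  · have huniv : (Prod.fst ⁻¹' B : Set (ℝ × ℝ)) =ᵐ[ν] Set.univ :=
      hfst.mono fun x hx => by change (x.1 ∈ B) = (x ∈ Set.univ); simp [hx, hcB]
    simp [setIntegral_congr_set huniv]
  · have hempty : (Prod.fst ⁻¹' B : Set (ℝ × ℝ)) =ᵐ[ν] (∅ : Set (ℝ × ℝ)) :=
      hfst.mono fun x hx => by change (x.1 ∈ B) = (x ∈ (∅ : Set (ℝ × ℝ))); simp [hx, hcB]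
    simp [setIntegral_congr_set hempty]

theorem lECE_map_const_fst (α : ℝ) (mu : Measure (ℝ × ℝ)) [IsProbabilityMeasure mu] (c : ℝ) :
    lECE α (mu.map fun x => (c, x.2)) = |c - ∫ x, x.2 ∂mu| ^ α := by
  have hmeas : Measurable fun x : ℝ × ℝ => (c, x.2) := measurable_const.prodMk measurable_snd
  set ν := mu.map fun x => (c, x.2)
  have : IsProbabilityMeasure ν := Measure.isProbabilityMeasure_map hmeas.aemeasurable
  have hfst : ∀ᵐ x ∂ν, x.1 = c :=
    (ae_map_iff hmeas.aemeasurable (measurable_fst (measurableSet_singleton c))).mpr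
      (.of_forall fun _ => rfl)
  have hsnd : ∫ x, x.2 ∂ν = ∫ x, x.2 ∂mu :=
    integral_map hmeas.aemeasurable measurable_snd.aestronglyMeasurable
  rw [lECE, ← hsnd, integral_congr_ae (g := fun _ => |c - ∫ x, x.2 ∂ν| ^ α)]
  · simp
  filter_upwards [hfst, condExp_predSigma_ae_eq_integral_of_fst_ae_eq hfst Prod.snd]
    with x hx hcond
  rw [hx, hcond]

/-- Replacing all predictions by their overall mean never increases the ℓα expected
calibration error. -/
theorem lECE_avg_le (α : ℝ) (hα : 1 ≤ α) (mu : Measure (ℝ × ℝ)) [IsProbabilityMeasure mu]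
    (hsupp : ∀ᵐ x ∂mu, x.1 ∈ Set.Icc (0:ℝ) 1 ∧ (x.2 = 0 ∨ x.2 = 1)) :
    lECE α (mu.map (fun x => ((∫ z, z.1 ∂mu), x.2))) ≤ lECE α mu := by
  set p := ENNReal.ofReal α
  have hp : 1 ≤ p := by simpa [p] using hα
  have hfst : MemLp Prod.fst p mu := by
    refine .of_bound measurable_fst.aestronglyMeasurable 1 ?_
    filter_upwards [hsupp] with x hx
    rw [Real.norm_eq_abs, abs_le]
    constructor <;> linarith [hx.1.1, hx.1.2]
  have hsnd : MemLp Prod.snd p mu := by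
    refine .of_bound measurable_snd.aestronglyMeasurable 1 ?_
    filter_upwards [hsupp] with x hx
    rcases hx.2 with h | h <;> simp [h]
  have hmean : ∫ x, x.1 - (mu[Prod.snd|predSigma]) x ∂mu = ∫ z, z.1 ∂mu - ∫ x, x.2 ∂mu := by
    rw [integral_sub (hfst.integrable hp) integrable_condExp, integral_condExp predSigma_le]
  calc lECE α (mu.map (fun x => ((∫ z, z.1 ∂mu), x.2)))
      = |∫ x, x.1 - (mu[Prod.snd|predSigma]) x ∂mu| ^ α := by
        rw [lECE_map_const_fst, hmean]
    _ ≤ lECE α mu :=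
        norm_integral_rpow_le_integral_norm_rpow hα (hfst.sub (hsnd.condExp hp))
end
end

section
/- Let α ≥ 1 and let J be a probability distribution of (v,y) ∈ [0,1] × {0,1}. Let J̄ be the distribution of (v̄, y) where (v,y) ~ J and v̄ := E_J[v] is deterministic. Then ℓα-distCal(J̄) ≤ ℓα-distCal(J), where ℓα-distCal(J) := inf over couplings Π of (u,v,y) ∈ [0,1] × [0,1] × {0,1} with Π-marginal of (v,y) equal to J and the Π-marginal distribution of (u,y) calibrated, of E_Π[|u − v|^α]. -/
open MeasureTheory Finset

noncomputable section

/-- A distribution of `(u, y)` is calibrated if `E[y | u] = u` almost surely; equivalently,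
`∫ y = ∫ u` over every event measurable in `u`. -/
def Calibrated (mu : Measure (ℝ × ℝ)) : Prop :=
  ∀ s : Set ℝ, MeasurableSet s →
    ∫ x in Prod.fst ⁻¹' s, x.2 ∂mu = ∫ x in Prod.fst ⁻¹' s, x.1 ∂mu

/-- The ℓα lower distance to calibration: the infimum of `E |u - v|^α` over couplings
`(u, v, y)` whose `(v,y)`-marginal is `mu` and whose `(u,y)`-marginal is calibrated. -/
def lDistCal (α : ℝ) (mu : Measure (ℝ × ℝ)) : ℝ :=
  sInf { c : ℝ | ∃ P : Measure (ℝ × ℝ × ℝ), IsProbabilityMeasure P ∧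
    P.map (fun x => x.2) = mu ∧
    Calibrated (P.map (fun x => (x.1, x.2.2))) ∧
    (∀ᵐ x ∂P, x.1 ∈ Set.Icc (0:ℝ) 1) ∧
    c = ∫ x, |x.1 - x.2.1| ^ α ∂P }

/-- Replacing all predictions by their overall mean never increases the ℓα lower distance
to calibration. -/
theorem lDistCal_avg_le (α : ℝ) (hα : 1 ≤ α) (mu : Measure (ℝ × ℝ)) [IsProbabilityMeasure mu]
    (hsupp : ∀ᵐ x ∂mu, x.1 ∈ Set.Icc (0:ℝ) 1 ∧ (x.2 = 0 ∨ x.2 = 1)) :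
    lDistCal α (mu.map (fun x => ((∫ z, z.1 ∂mu), x.2))) ≤ lDistCal α mu := by
  classical
  have hα0 : (0:ℝ) ≤ α := le_trans zero_le_one hα
  set m : ℝ := ∫ z, z.1 ∂mu with hm
  -- The original set of coupling costs is nonempty: take u := y.
  have hmeas0 : Measurable (fun x : ℝ × ℝ => (x.2, x)) := measurable_snd.prodMk measurable_id
  set P₀ : Measure (ℝ × ℝ × ℝ) := mu.map (fun x : ℝ × ℝ => (x.2, x)) with hP₀
  have hSne : { c : ℝ | ∃ P : Measure (ℝ × ℝ × ℝ), IsProbabilityMeasure P ∧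
      P.map (fun x => x.2) = mu ∧
      Calibrated (P.map (fun x => (x.1, x.2.2))) ∧
      (∀ᵐ x ∂P, x.1 ∈ Set.Icc (0:ℝ) 1) ∧
      c = ∫ x, |x.1 - x.2.1| ^ α ∂P }.Nonempty := by
    refine ⟨∫ x, |x.1 - x.2.1| ^ α ∂P₀, P₀, ?_, ?_, ?_, ?_, rfl⟩
    · exact Measure.isProbabilityMeasure_map hmeas0.aemeasurable
    · rw [hP₀, Measure.map_map measurable_snd hmeas0]
      exact Measure.map_id
    · have hgmeas : Measurable (fun x : ℝ × ℝ × ℝ => (x.1, x.2.2)) :=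
        measurable_fst.prodMk (measurable_snd.comp measurable_snd)
      rw [hP₀, Measure.map_map hgmeas hmeas0]
      show Calibrated (mu.map (fun x : ℝ × ℝ => (x.2, x.2)))
      intro s hs
      have hdiag : Measurable (fun x : ℝ × ℝ => (x.2, x.2)) :=
        measurable_snd.prodMk measurable_snd
      rw [setIntegral_map (hs.preimage measurable_fst)
          measurable_snd.aestronglyMeasurable hdiag.aemeasurable,
        setIntegral_map (hs.preimage measurable_fst)
          measurable_fst.aestronglyMeasurable hdiag.aemeasurable]
    · rw [hP₀, ae_map_iff hmeas0.aemeasurable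
        (measurableSet_Icc.preimage (measurable_fst : Measurable
          (fun x : ℝ × ℝ × ℝ => x.1)))]
      filter_upwards [hsupp] with x hx
      rcases hx.2 with h | h <;> simp [h]
  -- main step
  refine le_csInf hSne ?_
  rintro c ⟨P, hPprob, hPmarg, hPcal, hPbd, rfl⟩
  -- facts about P
  have hPsupp : ∀ᵐ x ∂P, x.2.1 ∈ Set.Icc (0:ℝ) 1 ∧ (x.2.2 = 0 ∨ x.2.2 = 1) := by
    have h := hsupp
    rw [← hPmarg, ae_map_iff measurable_snd.aemeasurable] at h
    · exact h
    · exact (measurableSet_Icc.preimage measurable_fst).inter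
        (((measurableSet_singleton (0:ℝ)).preimage measurable_snd).union
          ((measurableSet_singleton (1:ℝ)).preimage measurable_snd))
  set c₀ : ℝ := ∫ x, x.1 ∂P with hc₀
  -- integrabilities
  have hu_int : Integrable (fun x : ℝ × ℝ × ℝ => x.1) P := by
    refine Integrable.mono' (integrable_const 1) measurable_fst.aestronglyMeasurable ?_
    filter_upwards [hPbd] with x hx
    rw [Real.norm_eq_abs, abs_le]; exact ⟨by linarith [hx.1], hx.2⟩
  have hv_int : Integrable (fun x : ℝ × ℝ × ℝ => x.2.1) P := by
    refine Integrable.mono' (integrable_const 1)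
      (measurable_fst.comp measurable_snd).aestronglyMeasurable ?_
    filter_upwards [hPsupp] with x hx
    rw [Real.norm_eq_abs, abs_le]; exact ⟨by linarith [hx.1.1], hx.1.2⟩
  have habs_meas : Measurable (fun x : ℝ × ℝ × ℝ => |x.1 - x.2.1|) :=
    (measurable_fst.sub (measurable_fst.comp measurable_snd)).abs
  have habs_bd : ∀ᵐ x ∂P, |x.1 - x.2.1| ≤ 1 := by
    filter_upwards [hPbd, hPsupp] with x hx hx'
    rw [abs_le]
    exact ⟨by linarith [hx.1, hx'.1.2], by linarith [hx.2, hx'.1.1]⟩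
  have habs_int : Integrable (fun x : ℝ × ℝ × ℝ => |x.1 - x.2.1|) P := by
    refine Integrable.mono' (integrable_const 1) habs_meas.aestronglyMeasurable ?_
    filter_upwards [habs_bd] with x hx
    rwa [Real.norm_eq_abs, abs_abs]
  have hcost_int : Integrable (fun x : ℝ × ℝ × ℝ => |x.1 - x.2.1| ^ α) P := by
    refine Integrable.mono' (integrable_const 1)
      ((Real.continuous_rpow_const hα0).measurable.comp habs_meas).aestronglyMeasurable ?_
    filter_upwards [habs_bd] with x hx
    rw [Real.norm_eq_abs, abs_of_nonneg (Real.rpow_nonneg (abs_nonneg _) _)]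
    exact Real.rpow_le_one (abs_nonneg _) hx hα0
  -- E[y] = E[u] from calibration at s = univ
  have hgmeas : Measurable (fun x : ℝ × ℝ × ℝ => (x.1, x.2.2)) :=
    measurable_fst.prodMk (measurable_snd.comp measurable_snd)
  have hEy : ∫ x, x.2.2 ∂P = c₀ := by
    have h := hPcal Set.univ MeasurableSet.univ
    rw [Set.preimage_univ, setIntegral_univ, setIntegral_univ,
      integral_map hgmeas.aemeasurable measurable_snd.aestronglyMeasurable,
      integral_map hgmeas.aemeasurable measurable_fst.aestronglyMeasurable] at h
    exact h
  -- E[v] = m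
  have hEv : ∫ x, x.2.1 ∂P = m := by
    rw [hm, ← hPmarg,
      integral_map measurable_snd.aemeasurable measurable_fst.aestronglyMeasurable]
  -- c₀ ∈ [0, 1]
  have hc₀0 : 0 ≤ c₀ := integral_nonneg_of_ae (hPbd.mono fun x hx => hx.1)
  have hc₀1 : c₀ ≤ 1 := by
    calc c₀ ≤ ∫ _x, (1:ℝ) ∂P :=
          integral_mono_ae hu_int (integrable_const 1) (hPbd.mono fun x hx => hx.2)
      _ = 1 := by simp
  -- Jensen
  have hkey : |c₀ - m| ^ α ≤ ∫ x, |x.1 - x.2.1| ^ α ∂P := by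
    have h1 : c₀ - m = ∫ x, (x.1 - x.2.1) ∂P := by
      rw [integral_sub hu_int hv_int, hEv]
    have h2 : |c₀ - m| ≤ ∫ x, |x.1 - x.2.1| ∂P := by
      rw [h1]
      calc |∫ x, (x.1 - x.2.1) ∂P| = ‖∫ x, (x.1 - x.2.1) ∂P‖ := (Real.norm_eq_abs _).symm
        _ ≤ ∫ x, ‖x.1 - x.2.1‖ ∂P := norm_integral_le_integral_norm _
        _ = ∫ x, |x.1 - x.2.1| ∂P := by simp [Real.norm_eq_abs]
    have h3 : (∫ x, |x.1 - x.2.1| ∂P) ^ α ≤ ∫ x, |x.1 - x.2.1| ^ α ∂P := by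
      have := (convexOn_rpow hα).map_integral_le (μ := P)
        (f := fun x : ℝ × ℝ × ℝ => |x.1 - x.2.1|)
        ((Real.continuous_rpow_const hα0).continuousOn) isClosed_Ici
        (ae_of_all _ fun x => Set.mem_Ici.mpr (abs_nonneg _)) habs_int hcost_int
      exact this
    calc |c₀ - m| ^ α ≤ (∫ x, |x.1 - x.2.1| ∂P) ^ α :=
          Real.rpow_le_rpow (abs_nonneg _) h2 hα0
      _ ≤ _ := h3
  -- the new coupling
  have hFmeas : Measurable (fun x : ℝ × ℝ × ℝ => ((c₀, (m, x.2.2)) : ℝ × ℝ × ℝ)) :=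
    measurable_const.prodMk (measurable_const.prodMk (measurable_snd.comp measurable_snd))
  set P' : Measure (ℝ × ℝ × ℝ) := P.map (fun x => (c₀, (m, x.2.2))) with hP'
  have hP'prob : IsProbabilityMeasure P' := Measure.isProbabilityMeasure_map hFmeas.aemeasurable
  have hbdd : BddBelow { c : ℝ | ∃ P : Measure (ℝ × ℝ × ℝ), IsProbabilityMeasure P ∧
      P.map (fun x => x.2) = mu.map (fun x => (m, x.2)) ∧
      Calibrated (P.map (fun x => (x.1, x.2.2))) ∧
      (∀ᵐ x ∂P, x.1 ∈ Set.Icc (0:ℝ) 1) ∧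
      c = ∫ x, |x.1 - x.2.1| ^ α ∂P } := by
    refine ⟨0, ?_⟩
    rintro c ⟨Q, _, _, _, _, rfl⟩
    exact integral_nonneg fun x => Real.rpow_nonneg (abs_nonneg _) _
  have hmem : (∫ x, |x.1 - x.2.1| ^ α ∂P') ∈ { c : ℝ | ∃ P : Measure (ℝ × ℝ × ℝ),
      IsProbabilityMeasure P ∧
      P.map (fun x => x.2) = mu.map (fun x => (m, x.2)) ∧
      Calibrated (P.map (fun x => (x.1, x.2.2))) ∧
      (∀ᵐ x ∂P, x.1 ∈ Set.Icc (0:ℝ) 1) ∧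
      c = ∫ x, |x.1 - x.2.1| ^ α ∂P } := by
    refine ⟨P', hP'prob, ?_, ?_, ?_, rfl⟩
    · have hmg : Measurable (fun x : ℝ × ℝ => ((m, x.2) : ℝ × ℝ)) :=
        measurable_const.prodMk measurable_snd
      rw [hP', Measure.map_map measurable_snd hFmeas, ← hPmarg,
        Measure.map_map hmg measurable_snd]
      rfl
    · rw [hP', Measure.map_map hgmeas hFmeas]
      show Calibrated (P.map (fun x : ℝ × ℝ × ℝ => ((c₀, x.2.2) : ℝ × ℝ)))
      have hconst : Measurable (fun x : ℝ × ℝ × ℝ => ((c₀, x.2.2) : ℝ × ℝ)) :=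
        measurable_const.prodMk (measurable_snd.comp measurable_snd)
      intro s hs
      by_cases hcs : c₀ ∈ s
      · have hpre : (fun x : ℝ × ℝ × ℝ => ((c₀, x.2.2) : ℝ × ℝ)) ⁻¹' (Prod.fst ⁻¹' s)
            = Set.univ := by
          ext x; simp [hcs]
        rw [setIntegral_map (hs.preimage measurable_fst)
            measurable_snd.aestronglyMeasurable
            hconst.aemeasurable,
          setIntegral_map (hs.preimage measurable_fst)
            measurable_fst.aestronglyMeasurable
            hconst.aemeasurable,
          hpre, setIntegral_univ, setIntegral_univ, hEy]
        simp
      · have hpre : (fun x : ℝ × ℝ × ℝ => ((c₀, x.2.2) : ℝ × ℝ)) ⁻¹' (Prod.fst ⁻¹' s)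
            = ∅ := by
          ext x; simp [hcs]
        rw [setIntegral_map (hs.preimage measurable_fst)
            measurable_snd.aestronglyMeasurable
            hconst.aemeasurable,
          setIntegral_map (hs.preimage measurable_fst)
            measurable_fst.aestronglyMeasurable
            hconst.aemeasurable,
          hpre]
        simp
    · rw [hP', ae_map_iff hFmeas.aemeasurable
        (measurableSet_Icc.preimage (measurable_fst : Measurable
          (fun x : ℝ × ℝ × ℝ => x.1)))]
      exact ae_of_all _ fun x => ⟨hc₀0, hc₀1⟩
  have hval : ∫ x, |x.1 - x.2.1| ^ α ∂P' = |c₀ - m| ^ α := by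
    have hi : Measurable (fun x : ℝ × ℝ × ℝ => |x.1 - x.2.1| ^ α) :=
      (Real.continuous_rpow_const hα0).measurable.comp habs_meas
    rw [hP', integral_map hFmeas.aemeasurable hi.aestronglyMeasurable]
    simp
  calc lDistCal α (mu.map (fun x => (m, x.2))) ≤ ∫ x, |x.1 - x.2.1| ^ α ∂P' :=
        csInf_le hbdd hmem
    _ = |c₀ - m| ^ α := hval
    _ ≤ ∫ x, |x.1 - x.2.1| ^ α ∂P := hkey

end
end
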